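/- arXiv:2105.02370 — 2 statements merged into one kernel-verified Lean document; each statement's English description precedes it below -/
import Mathlib

section
/- Let δ_A be m_a×n_a and δ_B be m_b×n_b matrices over F₂, and suppose δ_A L + R δ_B = 0 where L ∈ F₂^{n_a×n_b}, R ∈ F₂^{m_a×m_b}. Let V = δ_A·L. Then every column of V lies in the column space of δ_A and every row of V (as a vector in F₂^{n_b}) lies in the row space of δ_B, and consequently there exists U ∈ F₂^{n_a×m_b} with V = δ_A·U·δ_B. -/
/-! In characteristic two the hypothesis says `δA * L = R * δB`, which exhibits the columns and
rows of `V`. For the factorization pick a generalized inverse `G` of `δB` (`δB * G * δB = δB`,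
which exists over any field): then `δA * (L * G) * δB = R * δB * G * δB = R * δB = V`. -/

open Matrix

theorem LinearMap.exists_comp_comp_eq_self {K V W : Type*} [DivisionRing K] [AddCommGroup V]
    [Module K V] [AddCommGroup W] [Module K W] (f : V →ₗ[K] W) :
    ∃ g : W →ₗ[K] V, f ∘ₗ g ∘ₗ f = f := by
  obtain ⟨s, hs⟩ := f.rangeRestrict.exists_rightInverse_of_surjective f.range_rangeRestrict
  obtain ⟨p, hp⟩ := f.range.subtype.exists_leftInverse_of_injective f.range.ker_subtype
  refine ⟨s ∘ₗ p, LinearMap.ext fun x => ?_⟩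
  have hpf : p (f x) = f.rangeRestrict x := LinearMap.congr_fun hp (f.rangeRestrict x)
  have hfs : f (s (f.rangeRestrict x)) = f x :=
    congrArg Subtype.val (LinearMap.congr_fun hs (f.rangeRestrict x))
  simp only [LinearMap.comp_apply, hpf, hfs]

theorem Matrix.exists_mul_mul_eq_self {K m n : Type*} [Field K] [Fintype m] [DecidableEq m]
    [Fintype n] [DecidableEq n] (B : Matrix m n K) : ∃ G : Matrix n m K, B * G * B = B := by
  obtain ⟨g, hg⟩ := (toLin' B).exists_comp_comp_eq_self
  refine ⟨LinearMap.toMatrix' g, toLin'.injective ?_⟩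
  rw [toLin'_mul, toLin'_mul, toLin'_toMatrix', LinearMap.comp_assoc, hg]

theorem Matrix.exists_mul_mul_eq_of_mul_eq_mul {K ma na mb nb : Type*} [Field K] [Fintype na]
    [Fintype mb] [DecidableEq mb] [Fintype nb] [DecidableEq nb] {A : Matrix ma na K}
    {B : Matrix mb nb K} {L : Matrix na nb K} {R : Matrix ma mb K} (h : A * L = R * B) :
    ∃ U : Matrix na mb K, A * L = A * U * B := by
  obtain ⟨G, hG⟩ := B.exists_mul_mul_eq_self
  refine ⟨L * G, ?_⟩
  calc A * L = R * (B * G * B) := by rw [hG, h]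
    _ = A * (L * G) * B := by
      rw [← Matrix.mul_assoc, ← Matrix.mul_assoc, ← h, Matrix.mul_assoc A]

/-- If `δ_A L + R δ_B = 0` and `V = δ_A L`, then every column of `V` lies in the column
space of `δ_A`, every row of `V` lies in the row space of `δ_B`, and hence
`V = δ_A U δ_B` for some `U`. -/
theorem middle_matrix_factorization
    (ma na mb nb : ℕ)
    (δA : Matrix (Fin ma) (Fin na) (ZMod 2))
    (δB : Matrix (Fin mb) (Fin nb) (ZMod 2))
    (L : Matrix (Fin na) (Fin nb) (ZMod 2))
    (R : Matrix (Fin ma) (Fin mb) (ZMod 2))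
    (h : δA * L + R * δB = 0) :
    (∀ j, (fun i => (δA * L) i j) ∈ LinearMap.range δA.mulVecLin) ∧
    (∀ i, (fun j => (δA * L) i j) ∈ LinearMap.range δB.transpose.mulVecLin) ∧
    (∃ U : Matrix (Fin na) (Fin mb) (ZMod 2), δA * L = δA * U * δB) := by
  have hV : δA * L = R * δB := by
    rw [eq_neg_of_add_eq_zero_left h, ZModModule.neg_eq_self]
  refine ⟨fun j => ⟨fun k => L k j, rfl⟩, fun i => ⟨R i, ?_⟩,
    exists_mul_mul_eq_of_mul_eq_mul hV⟩
  rw [hV, mulVecLin_apply, mulVec_transpose, mul_apply_eq_vecMul]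
end

section
/- Let δ_A be m_a×n_a and δ_B be m_b×n_b matrices over F₂, with classical minimum distances d_a = min weight of nonzero ker δ_A and d_bᵀ = min weight of nonzero ker δ_Bᵀ. Suppose (L_min, R_min) and (L̃, R̃) both satisfy δ_A L + R δ_B = S for the same S, that the number of rows of L_min outside im δ_Bᵀ is < d_a/2 and the number of columns of R_min outside im δ_A is < d_bᵀ/2, and suppose the same bounds hold for (L̃, R̃). If moreover the rowlog/collog index sets are homology invariants (as established), and (L_min,R_min), (L̃,R̃) differ by a syndrome-zero operator that anticommutes with some logical X-operator (f⊗k,0) with f a unit vector and k ∈ ker δ_B nonzero, then a contradiction follows: the logical part of L_min would have at least d_a/2 nonzero rows. -/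
/-!
Put `D := L_min - L̃`. Subtracting the two syndrome equations gives `δA * D = (R̃ - R_min) * δB`,
so for `k ∈ ker δB` the vector `v := D k` lies in `ker δA`; it is nonzero because `f ⬝ v = 1`.
A row of `D` lying in `im δBᵀ` is orthogonal to `k`, so `v` is supported on the rows where
`L_min` or `L̃` leaves `im δBᵀ`. Hence `d_a ≤ |v| < d_a/2 + d_a/2`.
-/

open Matrix

theorem hammingNorm_le_ncard {ι : Type*} [Fintype ι] {β : ι → Type*} [∀ i, Zero (β i)]
    [∀ i, DecidableEq (β i)] {x : ∀ i, β i} {s : Set ι} (hs : ∀ i, x i ≠ 0 → i ∈ s) :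
    hammingNorm x ≤ s.ncard := by
  rw [hammingNorm, ← Set.ncard_coe_finset]
  exact Set.ncard_le_ncard (fun i hi => hs i (by simpa using hi)) (Set.toFinite s)

section

variable {R : Type*} [CommRing R] {l m n o : Type*} [Fintype m] [Fintype n] [Fintype o]

theorem Matrix.mulVec_mulVec_sub_eq_zero_of_syndrome_eq {A : Matrix l m R} {B : Matrix o n R}
    {L L' : Matrix m n R} {C C' : Matrix l o R} {S : Matrix l n R}
    (h : A * L + C * B = S) (h' : A * L' + C' * B = S) {k : n → R} (hk : B *ᵥ k = 0) :
    A *ᵥ ((L - L') *ᵥ k) = 0 := by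
  have hAD : A * (L - L') = (C' - C) * B := by
    rw [Matrix.mul_sub, Matrix.sub_mul, eq_sub_of_add_eq h, eq_sub_of_add_eq h']
    abel
  rw [mulVec_mulVec, hAD, ← mulVec_mulVec, hk, mulVec_zero]

theorem Matrix.dotProduct_eq_zero_of_mem_range_transpose {B : Matrix o n R} {x : n → R}
    (hx : x ∈ LinearMap.range Bᵀ.mulVecLin) {k : n → R} (hk : B *ᵥ k = 0) : x ⬝ᵥ k = 0 := by
  obtain ⟨w, rfl⟩ := hx
  rw [mulVecLin_apply, mulVec_transpose, ← dotProduct_mulVec, hk, dotProduct_zero]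

theorem Matrix.hammingNorm_mulVec_sub_le [DecidableEq R] {B : Matrix o n R} {k : n → R}
    (hk : B *ᵥ k = 0) (L L' : Matrix m n R) :
    hammingNorm ((L - L') *ᵥ k) ≤
      {i | (fun j => L i j) ∉ LinearMap.range Bᵀ.mulVecLin}.ncard +
        {i | (fun j => L' i j) ∉ LinearMap.range Bᵀ.mulVecLin}.ncard := by
  refine (hammingNorm_le_ncard (s := _ ∪ _) fun i hi => ?_).trans (Set.ncard_union_le _ _)
  by_contra hrows
  simp only [Set.mem_union, Set.mem_ofPred_eq, not_or, not_not] at hrows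
  exact hi (dotProduct_eq_zero_of_mem_range_transpose (sub_mem hrows.1 hrows.2) hk)

end

theorem reshape_contradiction_general
    (ma na mb nb : ℕ)
    (δA : Matrix (Fin ma) (Fin na) (ZMod 2))
    (δB : Matrix (Fin mb) (Fin nb) (ZMod 2))
    (da : ℕ)
    (hda : ∀ v : Fin na → ZMod 2, v ≠ 0 → δA.mulVec v = 0 → da ≤ hammingNorm v)
    (S : Matrix (Fin ma) (Fin nb) (ZMod 2))
    (Lmin Ltilde : Matrix (Fin na) (Fin nb) (ZMod 2))
    (Rmin Rtilde : Matrix (Fin ma) (Fin mb) (ZMod 2))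
    (hmin : δA * Lmin + Rmin * δB = S)
    (htilde : δA * Ltilde + Rtilde * δB = S)
    (hrowmin : 2 * {i | (fun j => Lmin i j) ∉ LinearMap.range δB.transpose.mulVecLin}.ncard < da)
    (hrowtilde : 2 * {i | (fun j => Ltilde i j) ∉ LinearMap.range δB.transpose.mulVecLin}.ncard < da)
    (f : Fin na → ZMod 2)
    (k : Fin nb → ZMod 2) (hk : δB.mulVec k = 0)
    (hanti : dotProduct f ((Lmin + Ltilde).mulVec k) = 1) :
    False := by
  have hsub : Lmin + Ltilde = Lmin - Ltilde := by
    ext i j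
    exact (CharTwo.sub_eq_add _ _).symm
  rw [hsub] at hanti
  have hv0 : (Lmin - Ltilde) *ᵥ k ≠ 0 := fun h => by simp [h] at hanti
  have hker := mulVec_mulVec_sub_eq_zero_of_syndrome_eq hmin htilde hk
  have hweight := hammingNorm_mulVec_sub_le hk Lmin Ltilde
  have := hda _ hv0 hker
  omega

/-- Core contradiction of Proposition 4 (correctness of ReShape): two valid solutions
of the same syndrome equation, each with logical row-column weight below
`(d_a/2, d_bᵀ/2)`, cannot differ by a syndrome-zero operator anticommuting with a
left logical `X`-operator `(f ⊗ k, 0)`. -/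
theorem reshape_contradiction
    (ma na mb nb : ℕ)
    (δA : Matrix (Fin ma) (Fin na) (ZMod 2))
    (δB : Matrix (Fin mb) (Fin nb) (ZMod 2))
    (da dbT : ℕ)
    (hda : ∀ v : Fin na → ZMod 2, v ≠ 0 → δA.mulVec v = 0 → da ≤ hammingNorm v)
    (hdbT : ∀ w : Fin mb → ZMod 2, w ≠ 0 → δB.transpose.mulVec w = 0 → dbT ≤ hammingNorm w)
    (S : Matrix (Fin ma) (Fin nb) (ZMod 2))
    (Lmin Ltilde : Matrix (Fin na) (Fin nb) (ZMod 2))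
    (Rmin Rtilde : Matrix (Fin ma) (Fin mb) (ZMod 2))
    (hmin : δA * Lmin + Rmin * δB = S)
    (htilde : δA * Ltilde + Rtilde * δB = S)
    (hrowmin : 2 * {i | (fun j => Lmin i j) ∉ LinearMap.range δB.transpose.mulVecLin}.ncard < da)
    (hcolmin : 2 * {j | (fun i => Rmin i j) ∉ LinearMap.range δA.mulVecLin}.ncard < dbT)
    (hrowtilde : 2 * {i | (fun j => Ltilde i j) ∉ LinearMap.range δB.transpose.mulVecLin}.ncard < da)
    (hcoltilde : 2 * {j | (fun i => Rtilde i j) ∉ LinearMap.range δA.mulVecLin}.ncard < dbT)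
    (f : Fin na → ZMod 2) (hf : ∃ i₀, f = Pi.single i₀ 1)
    (k : Fin nb → ZMod 2) (hk : δB.mulVec k = 0) (hk0 : k ≠ 0)
    (hanti : dotProduct f ((Lmin + Ltilde).mulVec k) = 1) :
    False :=
  reshape_contradiction_general ma na mb nb δA δB da hda S Lmin Ltilde Rmin Rtilde hmin htilde
    hrowmin hrowtilde f k hk hanti
end
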